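/- Suppose M_{D,E,F} with diagonal A ∈ B(X), B ∈ B(Y) inner regular, C ∈ B(Z) is invertible for some D, E, F. Then N(B) embeds (via a bounded left invertible operator) into X/R(A), and Y/R(B) embeds into N(C). -/

import Mathlib

/-- An operator between (semi)normed spaces is invertible if it has a bounded two-sided
inverse. -/
def IsInvertibleCLM {U V : Type*} [SeminormedAddCommGroup U] [NormedSpace ℝ U]
    [SeminormedAddCommGroup V] [NormedSpace ℝ V] (T : U →L[ℝ] V) : Prop :=
  ∃ T' : V →L[ℝ] U, T'.comp T = ContinuousLinearMap.id ℝ U ∧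
    T.comp T' = ContinuousLinearMap.id ℝ V

/-- The `3 × 3` upper triangular operator matrix with diagonal `A, B, C` and strictly
upper entries `D, E, F`, acting on `X ⊕ Y ⊕ Z` by
`(x, y, z) ↦ (A x + D y + E z, B y + F z, C z)`. -/
def triM {X Y Z : Type*}
    [NormedAddCommGroup X] [NormedSpace ℝ X]
    [NormedAddCommGroup Y] [NormedSpace ℝ Y]
    [NormedAddCommGroup Z] [NormedSpace ℝ Z]
    (A : X →L[ℝ] X) (B : Y →L[ℝ] Y) (C : Z →L[ℝ] Z)
    (D : Y →L[ℝ] X) (E : Z →L[ℝ] X) (F : Z →L[ℝ] Y) :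
    (X × Y × Z) →L[ℝ] (X × Y × Z) :=
  (A.comp (ContinuousLinearMap.fst ℝ X (Y × Z)) +
      D.comp ((ContinuousLinearMap.fst ℝ Y Z).comp (ContinuousLinearMap.snd ℝ X (Y × Z))) +
      E.comp ((ContinuousLinearMap.snd ℝ Y Z).comp (ContinuousLinearMap.snd ℝ X (Y × Z)))).prod
    ((B.comp ((ContinuousLinearMap.fst ℝ Y Z).comp (ContinuousLinearMap.snd ℝ X (Y × Z))) +
        F.comp ((ContinuousLinearMap.snd ℝ Y Z).comp (ContinuousLinearMap.snd ℝ X (Y × Z)))).prod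
      (C.comp ((ContinuousLinearMap.snd ℝ Y Z).comp (ContinuousLinearMap.snd ℝ X (Y × Z)))))

/-!
Let `M'` be the inverse of `M = M_{D,E,F}`. Reading off `M' M = 1` at `(x, 0, 0)` and `(0, y, 0)`
with `B y = 0`, the `Y`-coordinate `b` of `x ↦ M' (x, 0, 0)` kills `R(A)` and is a left inverse of
`D` on `N(B)`. Reading off `M M' = 1` at `(0, y, 0)`, the `Z`-coordinate `c` of `y ↦ M' (0, y, 0)`
lands in `N(C)` and `F c = 1` modulo `R(B)`. Inner regularity `B B' B = B` supplies the bounded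
retraction `1 - B'B` of `Y` onto `N(B)` and the bounded section `[y] ↦ y - BB'y` of `Y → Y/R(B)`,
so `[x] ↦ (1 - B'B) b x` is a left inverse of `y ↦ [D y]` and `z ↦ [F z]` is a left inverse of
`[y] ↦ c (y - BB'y)`.
-/

section QuotientEmbedding

variable {R : Type*} [Ring R] {X Y Z : Type*}
  [TopologicalSpace X] [AddCommGroup X] [Module R X]
  [TopologicalSpace Y] [AddCommGroup Y] [Module R Y]
  [TopologicalSpace Z] [AddCommGroup Z] [Module R Z]

open LinearMap (ker range)

theorem exists_retraction_ker_of_comp_comp_eq_self [IsTopologicalAddGroup Y]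
    {B B' : Y →L[R] Y}
    (hB : B ∘L B' ∘L B = B) :
    ∃ P : Y →L[R] ker (B : Y →ₗ[R] Y), ∀ k : ker (B : Y →ₗ[R] Y), P k = k := by
  have hB' : ∀ y, B (B' (B y)) = B y := fun y => congr($hB y)
  refine ⟨(.id R Y - B' ∘L B).codRestrict _ fun y => by simp [hB'], ?_⟩
  rintro ⟨k, hk : B k = 0⟩
  ext
  simp [hk]

theorem exists_section_mkQ_range_of_comp_comp_eq_self [IsTopologicalAddGroup Y]
    {B B' : Y →L[R] Y}
    (hB : B ∘L B' ∘L B = B) :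
    ∃ s : Y ⧸ range (B : Y →ₗ[R] Y) →L[R] Y, ∀ q, Submodule.mkQ _ (s q) = q := by
  have hB' : ∀ y, B (B' (B y)) = B y := fun y => congr($hB y)
  refine ⟨(range (B : Y →ₗ[R] Y)).liftQL (.id R Y - B ∘L B') ?_, fun q => ?_⟩
  · rintro _ ⟨y, rfl⟩
    simp [hB']
  · obtain ⟨y, rfl⟩ := Submodule.mkQ_surjective _ q
    simp

theorem exists_leftInverse_submodule_to_quotient {K : Submodule R Y} {S : Submodule R X}
    (P : Y →L[R] K) (hP : ∀ k : K, P k = k) (D : Y →L[R] X) (b : X →L[R] Y)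
    (hbS : ∀ x ∈ S, b x = 0) (hbD : ∀ y ∈ K, b (D y) = y) :
    ∃ (J : K →L[R] X ⧸ S) (J' : X ⧸ S →L[R] K), J' ∘L J = .id R K := by
  refine ⟨S.mkQL ∘L D ∘L K.subtypeL, S.liftQL (P ∘L b) fun x hx => by simp [hbS x hx], ?_⟩
  ext ⟨y, hy⟩
  change (P (b (D y)) : Y) = y
  rw [hbD y hy, hP ⟨y, hy⟩]

theorem exists_leftInverse_quotient_to_submodule {S : Submodule R Y} {K : Submodule R Z}
    (s : Y ⧸ S →L[R] Y) (hs : ∀ q, S.mkQ (s q) = q) (F : Z →L[R] Y) (c : Y →L[R] Z)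
    (hcK : ∀ y, c y ∈ K) (hFc : ∀ y, y - F (c y) ∈ S) :
    ∃ (J : Y ⧸ S →L[R] K) (J' : K →L[R] Y ⧸ S), J' ∘L J = .id R (Y ⧸ S) := by
  refine ⟨c.codRestrict K hcK ∘L s, S.mkQL ∘L F ∘L K.subtypeL, ?_⟩
  ext q
  conv_rhs => rw [← hs q]
  simpa [Submodule.Quotient.eq] using S.neg_mem (hFc (s q))

end QuotientEmbedding

section TriangularCompletion

variable {X Y Z : Type*}
  [NormedAddCommGroup X] [NormedSpace ℝ X]
  [NormedAddCommGroup Y] [NormedSpace ℝ Y]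
  [NormedAddCommGroup Z] [NormedSpace ℝ Z]
  {A : X →L[ℝ] X} {B : Y →L[ℝ] Y} {C : Z →L[ℝ] Z}
  {D : Y →L[ℝ] X} {E : Z →L[ℝ] X} {F : Z →L[ℝ] Y} {M' : X × Y × Z →L[ℝ] X × Y × Z}

open LinearMap (ker range)

@[simp]
theorem triM_apply (v : X × Y × Z) :
    triM A B C D E F v = (A v.1 + D v.2.1 + E v.2.2, B v.2.1 + F v.2.2, C v.2.2) :=
  rfl

theorem exists_block_of_comp_triM_eq_id (hM' : M' ∘L triM A B C D E F = .id ℝ _) :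
    ∃ b : X →L[ℝ] Y, (∀ x, b (A x) = 0) ∧ ∀ y ∈ ker (B : Y →ₗ[ℝ] Y), b (D y) = y := by
  have hM'v (v : X × Y × Z) : M' (triM A B C D E F v) = v := congr($hM' v)
  refine ⟨.fst ℝ Y Z ∘L .snd ℝ X (Y × Z) ∘L M' ∘L .inl ℝ X (Y × Z), fun x => ?_, fun y hy => ?_⟩
  · simpa [Prod.mk_zero_zero] using congr(($(hM'v (x, 0, 0))).2.1)
  · simpa [show B y = 0 from hy, Prod.mk_zero_zero] using congr(($(hM'v (0, y, 0))).2.1)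

theorem exists_block_of_triM_comp_eq_id (hM' : triM A B C D E F ∘L M' = .id ℝ _) :
    ∃ c : Y →L[ℝ] Z,
      (∀ y, c y ∈ ker (C : Z →ₗ[ℝ] Z)) ∧ ∀ y, y - F (c y) ∈ range (B : Y →ₗ[ℝ] Y) := by
  have hM'v (v : X × Y × Z) : triM A B C D E F (M' v) = v := congr($hM' v)
  refine ⟨.snd ℝ Y Z ∘L .snd ℝ X (Y × Z) ∘L M' ∘L .inr ℝ X (Y × Z) ∘L .inl ℝ Y Z,
    fun y => ?_, fun y => ⟨(M' (0, y, 0)).2.1, ?_⟩⟩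
  · simpa using congr(($(hM'v (0, y, 0))).2.2)
  · simpa [eq_sub_iff_add_eq] using congr(($(hM'v (0, y, 0))).2.1)

end TriangularCompletion

theorem completion_necessary_embeddings_general {X Y Z : Type*}
    [NormedAddCommGroup X] [NormedSpace ℝ X]
    [NormedAddCommGroup Y] [NormedSpace ℝ Y]
    [NormedAddCommGroup Z] [NormedSpace ℝ Z]
    (A : X →L[ℝ] X) (B : Y →L[ℝ] Y) (C : Z →L[ℝ] Z)
    (hB : ∃ B' : Y →L[ℝ] Y, B.comp (B'.comp B) = B)
    (h : ∃ (D : Y →L[ℝ] X) (E : Z →L[ℝ] X) (F : Z →L[ℝ] Y),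
      IsInvertibleCLM (triM A B C D E F)) :
    (∃ (J₁ : ↥(LinearMap.ker (B : Y →ₗ[ℝ] Y)) →L[ℝ] (X ⧸ LinearMap.range (A : X →ₗ[ℝ] X)))
      (J₁' : (X ⧸ LinearMap.range (A : X →ₗ[ℝ] X)) →L[ℝ] ↥(LinearMap.ker (B : Y →ₗ[ℝ] Y))),
        J₁'.comp J₁ = ContinuousLinearMap.id ℝ ↥(LinearMap.ker (B : Y →ₗ[ℝ] Y))) ∧
    (∃ (J₂ : (Y ⧸ LinearMap.range (B : Y →ₗ[ℝ] Y)) →L[ℝ] ↥(LinearMap.ker (C : Z →ₗ[ℝ] Z)))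
      (J₂' : ↥(LinearMap.ker (C : Z →ₗ[ℝ] Z)) →L[ℝ] (Y ⧸ LinearMap.range (B : Y →ₗ[ℝ] Y))),
        J₂'.comp J₂ = ContinuousLinearMap.id ℝ (Y ⧸ LinearMap.range (B : Y →ₗ[ℝ] Y))) := by
  obtain ⟨B', hB'⟩ := hB
  obtain ⟨D, E, F, M', hM'M, hMM'⟩ := h
  obtain ⟨P, hP⟩ := exists_retraction_ker_of_comp_comp_eq_self hB'
  obtain ⟨s, hs⟩ := exists_section_mkQ_range_of_comp_comp_eq_self hB'
  obtain ⟨b, hbA, hbD⟩ := exists_block_of_comp_triM_eq_id hM'M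
  obtain ⟨c, hcC, hFc⟩ := exists_block_of_triM_comp_eq_id hMM'
  exact ⟨exists_leftInverse_submodule_to_quotient P hP D b (by rintro _ ⟨x, rfl⟩; exact hbA x)
    hbD, exists_leftInverse_quotient_to_submodule s hs F c hcC hFc⟩

/-- If some completion `M_{D,E,F}` with diagonal `A`, `B` inner regular, `C` is
invertible, then `N(B)` embeds into `X/R(A)` and `Y/R(B)` embeds into `N(C)`
via bounded left invertible operators. -/
theorem completion_necessary_embeddings {X Y Z : Type*}
    [NormedAddCommGroup X] [NormedSpace ℝ X] [CompleteSpace X]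
    [NormedAddCommGroup Y] [NormedSpace ℝ Y] [CompleteSpace Y]
    [NormedAddCommGroup Z] [NormedSpace ℝ Z] [CompleteSpace Z]
    (A : X →L[ℝ] X) (B : Y →L[ℝ] Y) (C : Z →L[ℝ] Z)
    (hB : ∃ B' : Y →L[ℝ] Y, B.comp (B'.comp B) = B)
    (h : ∃ (D : Y →L[ℝ] X) (E : Z →L[ℝ] X) (F : Z →L[ℝ] Y),
      IsInvertibleCLM (triM A B C D E F)) :
    (∃ (J₁ : ↥(LinearMap.ker (B : Y →ₗ[ℝ] Y)) →L[ℝ] (X ⧸ LinearMap.range (A : X →ₗ[ℝ] X)))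
      (J₁' : (X ⧸ LinearMap.range (A : X →ₗ[ℝ] X)) →L[ℝ] ↥(LinearMap.ker (B : Y →ₗ[ℝ] Y))),
        J₁'.comp J₁ = ContinuousLinearMap.id ℝ ↥(LinearMap.ker (B : Y →ₗ[ℝ] Y))) ∧
    (∃ (J₂ : (Y ⧸ LinearMap.range (B : Y →ₗ[ℝ] Y)) →L[ℝ] ↥(LinearMap.ker (C : Z →ₗ[ℝ] Z)))
      (J₂' : ↥(LinearMap.ker (C : Z →ₗ[ℝ] Z)) →L[ℝ] (Y ⧸ LinearMap.range (B : Y →ₗ[ℝ] Y))),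
        J₂'.comp J₂ = ContinuousLinearMap.id ℝ (Y ⧸ LinearMap.range (B : Y →ₗ[ℝ] Y))) :=
  completion_necessary_embeddings_general A B C hB h
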